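/- arXiv:0905.1505 — 3 statements merged into one kernel-verified Lean document; each statement's English description precedes it below -/
import Mathlib

section
/- Let p be a prime and V a subgroup of (Q, +) such that ‖V‖_p is finite and nonzero. Then there exists v ∈ V with ‖v‖_p = ‖V‖_p, and the elements 0, v, 2v, ..., (p−1)v lie in pairwise distinct cosets of the subgroup V_{(p)} = { x ∈ V : ‖x‖_p < ‖V‖_p }. -/
/-!
The nonzero `p`-adic norms are the powers `p ^ (-n)`, so a bound on the norms of `V` bounds the
valuations of its nonzero elements from below; an element of least valuation has maximal norm.
Multiplying by an integer prime to `p` preserves the `p`-adic norm, and `i - j` is prime to `p`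
for distinct `i j < p`, so `i • v - j • v` has the full norm `‖V‖_p`.
-/

open scoped ENNReal

theorem padicValRat_bddBelow_of_padicNorm_bddAbove {p : ℕ} (hp : 1 < p) {S : Set ℚ}
    (hS : BddAbove (padicNorm p '' S)) :
    BddBelow (padicValRat p '' (S \ {0})) := by
  obtain ⟨C, hC⟩ := hS
  obtain ⟨m, hm⟩ := pow_unbounded_of_one_lt C (by exact_mod_cast hp : (1 : ℚ) < p)
  refine ⟨-m, ?_⟩
  rintro _ ⟨x, ⟨hxS, hx0⟩, rfl⟩
  have hnorm : (p : ℚ) ^ (-padicValRat p x) < (p : ℚ) ^ (m : ℤ) := by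
    rw [← padicNorm.eq_zpow_of_nonzero hx0, zpow_natCast]
    exact (hC ⟨x, hxS, rfl⟩).trans_lt hm
  have := (zpow_lt_zpow_iff_right₀ (by exact_mod_cast hp : (1 : ℚ) < p)).mp hnorm
  omega

theorem exists_forall_padicNorm_le {p : ℕ} (hp : 1 < p) {S : Set ℚ} (hne : S.Nonempty)
    (hS : BddAbove (padicNorm p '' S)) :
    ∃ v ∈ S, ∀ x ∈ S, padicNorm p x ≤ padicNorm p v := by
  by_cases hzero : S ⊆ {0}
  · obtain ⟨v, hv⟩ := hne
    refine ⟨v, hv, fun x hx => ?_⟩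
    rw [hzero hx, hzero hv]
  obtain ⟨x₀, hx₀⟩ := Set.not_subset.mp hzero
  obtain ⟨n, ⟨v, hv, rfl⟩, hleast⟩ :=
    Int.exists_least_of_bdd (padicValRat_bddBelow_of_padicNorm_bddAbove hp hS) ⟨_, x₀, hx₀, rfl⟩
  refine ⟨v, hv.1, fun x hx => ?_⟩
  rcases eq_or_ne x 0 with rfl | hx0
  · simpa using padicNorm.nonneg v
  rw [padicNorm.eq_zpow_of_nonzero hx0, padicNorm.eq_zpow_of_nonzero hv.2]
  exact zpow_le_zpow_right₀ (by exact_mod_cast hp.le) (neg_le_neg (hleast _ ⟨x, ⟨hx, hx0⟩, rfl⟩))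

theorem padicNorm_zsmul_of_not_dvd {p : ℕ} [Fact p.Prime] {k : ℤ} (hk : ¬ (p : ℤ) ∣ k) (x : ℚ) :
    padicNorm p (k • x) = padicNorm p x := by
  rw [zsmul_eq_mul, padicNorm.mul, (padicNorm.int_eq_one_iff k).mpr hk, one_mul]

theorem Fin.not_dvd_intCast_sub {n : ℕ} {i j : Fin n} (hij : i ≠ j) : ¬ (n : ℤ) ∣ (i : ℤ) - j := by
  intro hdvd
  have hi := i.isLt
  have hj := j.isLt
  have hsub := Int.eq_zero_of_abs_lt_dvd hdvd (abs_sub_lt_iff.mpr ⟨by omega, by omega⟩)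
  exact hij (Fin.ext (by omega))

theorem exists_maximal_norm_distinct_cosets_general (p : ℕ) (hp : p.Prime) (V : AddSubgroup ℚ)
    (NV : ℝ≥0∞)
    (hNV : NV = ⨆ x ∈ V, ENNReal.ofReal ((padicNorm p x : ℝ)))
    (hfin : NV < ⊤) :
    ∃ v ∈ V, ENNReal.ofReal ((padicNorm p v : ℝ)) = NV ∧
      ∀ i j : Fin p, ((i : ℤ) • v - (j : ℤ) • v ∈
        {x : ℚ | x ∈ V ∧ ENNReal.ofReal ((padicNorm p x : ℝ)) < NV}) → i = j := by
  have : Fact p.Prime := ⟨hp⟩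
  have hle : ∀ x ∈ V, ENNReal.ofReal (padicNorm p x) ≤ NV := fun x hx =>
    hNV ▸ le_iSup₂ (f := fun x _ => ENNReal.ofReal (padicNorm p x)) x hx
  have hbdd : BddAbove (padicNorm p '' V) := by
    refine ⟨⌈NV.toReal⌉₊, ?_⟩
    rintro _ ⟨x, hx, rfl⟩
    have hx_le := (ENNReal.ofReal_le_iff_le_toReal hfin.ne).mp (hle x hx)
    exact_mod_cast hx_le.trans (Nat.le_ceil _)
  obtain ⟨v, hv, hmax⟩ := exists_forall_padicNorm_le hp.one_lt ⟨0, V.zero_mem⟩ hbdd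
  have hvNV : ENNReal.ofReal (padicNorm p v) = NV :=
    le_antisymm (hle v hv) <| hNV ▸ iSup₂_le fun x hx =>
      ENNReal.ofReal_le_ofReal (by exact_mod_cast hmax x hx)
  refine ⟨v, hv, hvNV, fun i j ⟨_, hlt⟩ => ?_⟩
  by_contra hij
  rw [← sub_smul, padicNorm_zsmul_of_not_dvd (Fin.not_dvd_intCast_sub hij), hvNV] at hlt
  exact hlt.false

/-- If `V ≤ (ℚ, +)` satisfies `0 < ‖V‖_p < ∞`, then there is `v ∈ V` with `‖v‖_p = ‖V‖_p`, and
`0, v, 2v, ..., (p-1)v` lie in pairwise distinct cosets of `V_{(p)} = {x ∈ V : ‖x‖_p < ‖V‖_p}`. -/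
theorem exists_maximal_norm_distinct_cosets (p : ℕ) (hp : p.Prime) (V : AddSubgroup ℚ)
    (NV : ℝ≥0∞)
    (hNV : NV = ⨆ x ∈ V, ENNReal.ofReal ((padicNorm p x : ℝ)))
    (h0 : 0 < NV) (hfin : NV < ⊤) :
    ∃ v ∈ V, ENNReal.ofReal ((padicNorm p v : ℝ)) = NV ∧
      ∀ i j : Fin p, ((i : ℤ) • v - (j : ℤ) • v ∈
        {x : ℚ | x ∈ V ∧ ENNReal.ofReal ((padicNorm p x : ℝ)) < NV}) → i = j :=
  exists_maximal_norm_distinct_cosets_general p hp V NV hNV hfin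
end

section
/- Let Z be an abelian group, P = { v_0 + a_1 v_1 + ... + a_d v_d : 0 ≤ a_i < N_i } a generalized arithmetic progression in Z, and Λ ≤ Z a subgroup. Suppose P is proper (the representation of each element is unique) and p is a prime with the property that whenever a'_1 v_1 + c ∈ Λ and a''_1 v_1 + c ∈ Λ for integers a'_1, a''_1 and c ∈ Z of the appropriate form c = v_0 + Σ_{i≥2} a_i v_i, then p divides a'_1 − a''_1. Then |P ∩ Λ| / |P| ≤ ⌈N_1 / p⌉ / N_1. -/
/-!
Properness identifies `P` with the box `∏ [0, N_i)` of coefficient vectors, and `P ∩ Λ` with the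
vectors landing in `Λ`. Group these by their coordinates other than the first: within one group
the first coordinates are pairwise congruent mod `p` by hypothesis, so a group has at most
`⌈N₁/p⌉` members, against `N₁` vectors of the box with the same other coordinates.
-/

open Finset

theorem Finset.card_le_ceil_div_of_modEq {s : Finset ℕ} {n p : ℕ} (hp : 0 < p)
    (hs : ∀ x ∈ s, x < n) (hmod : ∀ x ∈ s, ∀ y ∈ s, x ≡ y [MOD p]) :
    (#s : ℤ) ≤ ⌈(n : ℚ) / p⌉ := by
  rcases s.eq_empty_or_nonempty with rfl | ⟨v, hv⟩
  · simp only [card_empty, Nat.cast_zero]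
    positivity
  have hsub : s ⊆ {x ∈ range n | x ≡ v [MOD p]} := fun x hx =>
    mem_filter.2 ⟨mem_range.2 (hs x hx), hmod x hx v hv⟩
  calc (#s : ℤ) ≤ Nat.count (· ≡ v [MOD p]) n := by
        rw [Nat.count_eq_card_filter_range]
        exact_mod_cast card_le_card hsub
    _ = ⌈((n : ℚ) - (v % p : ℕ)) / p⌉ := Nat.count_modEq_card_eq_ceil n hp v
    _ ≤ ⌈(n : ℚ) / p⌉ := by gcongr; exact sub_le_self _ (Nat.cast_nonneg _)

theorem Finset.card_le_ceil_div_mul_prod_of_modEq {ι : Type*} [Fintype ι] [DecidableEq ι]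
    {N : ι → ℕ} {p : ℕ} (hp : 0 < p) (i₀ : ι) {S : Finset (ι → ℕ)}
    (hS : S ⊆ Fintype.piFinset fun i => range (N i))
    (hmod : ∀ a ∈ S, ∀ b ∈ S, (∀ j ≠ i₀, a j = b j) → a i₀ ≡ b i₀ [MOD p]) :
    (#S : ℤ) ≤ ⌈(N i₀ : ℚ) / p⌉ * ∏ j : {j // j ≠ i₀}, (N j : ℤ) := by
  set rest : (ι → ℕ) → {j // j ≠ i₀} → ℕ := fun a j => a j
  have hmaps : ∀ a ∈ S, rest a ∈ Fintype.piFinset fun j : {j // j ≠ i₀} => range (N j) :=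
    fun a ha => Fintype.mem_piFinset.2 fun j => Fintype.mem_piFinset.1 (hS ha) j
  have hfiber : ∀ r, (#{a ∈ S | rest a = r} : ℤ) ≤ ⌈(N i₀ : ℚ) / p⌉ := by
    intro r
    set F := {a ∈ S | rest a = r}
    have hagree : ∀ a ∈ F, ∀ b ∈ F, ∀ j ≠ i₀, a j = b j := fun a ha b hb j hj =>
      congrFun ((mem_filter.1 ha).2.trans (mem_filter.1 hb).2.symm) ⟨j, hj⟩
    have hinj : Set.InjOn (fun a : ι → ℕ => a i₀) F := fun a ha b hb hab =>
      funext fun j => if hj : j = i₀ then hj ▸ hab else hagree a ha b hb j hj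
    rw [← card_image_of_injOn hinj]
    refine card_le_ceil_div_of_modEq hp ?_ ?_
    · simp only [mem_image]
      rintro _ ⟨a, ha, rfl⟩
      exact mem_range.1 (Fintype.mem_piFinset.1 (hS (mem_filter.1 ha).1) i₀)
    · simp only [mem_image]
      rintro _ ⟨a, ha, rfl⟩ _ ⟨b, hb, rfl⟩
      exact hmod a (mem_filter.1 ha).1 b (mem_filter.1 hb).1 (hagree a ha b hb)
  rw [card_eq_sum_card_fiberwise hmaps, Nat.cast_sum]
  calc ∑ r ∈ Fintype.piFinset (fun j : {j // j ≠ i₀} => range (N j)), (#{a ∈ S | rest a = r} : ℤ)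
      ≤ ∑ _r ∈ Fintype.piFinset (fun j : {j // j ≠ i₀} => range (N j)), ⌈(N i₀ : ℚ) / p⌉ :=
        sum_le_sum fun r _ => hfiber r
    _ = ⌈(N i₀ : ℚ) / p⌉ * ∏ j : {j // j ≠ i₀}, (N j : ℤ) := by
        simp [Fintype.card_piFinset, mul_comm]

theorem div_mul_le_div_of_le_mul {K : Type*} [Field K] [LinearOrder K] [IsStrictOrderedRing K]
    {s c n r : K} (hc : 0 ≤ c) (hn : 0 ≤ n) (hr : 0 ≤ r) (h : s ≤ c * r) :
    s / (n * r) ≤ c / n := by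
  rcases hr.eq_or_lt with rfl | hr
  · simp only [mul_zero, div_zero]
    positivity
  calc s / (n * r) ≤ c * r / (n * r) := by gcongr
    _ = c / n := mul_div_mul_right _ _ hr.ne'

theorem Set.ncard_image_inter_eq_card_filter {α β : Type*} {f : α → β} {s : Finset α}
    (hf : Set.InjOn f s) (t : Set β) [DecidablePred (· ∈ t)] :
    (f '' s ∩ t).ncard = #{a ∈ s | f a ∈ t} := by
  rw [← Set.image_inter_preimage, (hf.mono Set.inter_subset_left).ncard_image,
    ← Set.ncard_coe_finset, coe_filter]
  rfl

theorem ncard_image_inter_div_ncard_image_le {ι β : Type*} [Fintype ι] [DecidableEq ι]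
    {N : ι → ℕ} {p : ℕ} (hp : 0 < p) (i₀ : ι) {f : (ι → ℕ) → β}
    (hf : Set.InjOn f (Fintype.piFinset fun i => range (N i))) (t : Set β)
    (hmod : ∀ a ∈ Fintype.piFinset (fun i => range (N i)),
      ∀ b ∈ Fintype.piFinset (fun i => range (N i)),
      f a ∈ t → f b ∈ t → (∀ j ≠ i₀, a j = b j) → a i₀ ≡ b i₀ [MOD p]) :
    ((f '' (Fintype.piFinset fun i => range (N i)) ∩ t).ncard : ℚ) /
        (f '' (Fintype.piFinset fun i => range (N i))).ncard ≤
      ⌈(N i₀ : ℚ) / p⌉ / N i₀ := by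
  classical
  have hS := card_le_ceil_div_mul_prod_of_modEq hp i₀
    (filter_subset (f · ∈ t) (Fintype.piFinset fun i => range (N i)))
    fun a ha b hb => hmod a (mem_filter.1 ha).1 b (mem_filter.1 hb).1
      (mem_filter.1 ha).2 (mem_filter.1 hb).2
  rw [Set.ncard_image_inter_eq_card_filter hf, hf.ncard_image,
    Set.ncard_coe_finset, Fintype.card_piFinset, Fintype.prod_eq_mul_prod_subtype_ne _ i₀]
  simp only [card_range]
  push_cast
  exact div_mul_le_div_of_le_mul (by positivity) (by positivity) (by positivity)
    (by exact_mod_cast hS)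

theorem gap_inter_subgroup_density_le_general
    {Z : Type*} [AddCommGroup Z] (d : ℕ) (hd : 1 ≤ d)
    (v₀ : Z) (v : Fin d → Z) (N : Fin d → ℕ)
    (P : Set Z)
    (hP : P = {x : Z | ∃ a : Fin d → ℕ, (∀ i, a i < N i) ∧
      x = v₀ + ∑ i, (a i : ℤ) • v i})
    (hproper : ∀ a b : Fin d → ℕ, (∀ i, a i < N i) → (∀ i, b i < N i) →
      v₀ + ∑ i, (a i : ℤ) • v i = v₀ + ∑ i, (b i : ℤ) • v i → a = b)
    (Λ : AddSubgroup Z) (p : ℕ) (hp : p.Prime)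
    (hdvd : ∀ (a₁ a₁' : ℤ) (c : Z),
      (∃ a : Fin d → ℕ, (∀ i, a i < N i) ∧
        c = v₀ + ∑ i ∈ Finset.univ.erase (⟨0, hd⟩ : Fin d), (a i : ℤ) • v i) →
      a₁ • v ⟨0, hd⟩ + c ∈ Λ → a₁' • v ⟨0, hd⟩ + c ∈ Λ → (p : ℤ) ∣ (a₁ - a₁')) :
    ((P ∩ (Λ : Set Z)).ncard : ℚ) / P.ncard ≤ (⌈(N ⟨0, hd⟩ : ℚ) / p⌉ : ℚ) / N ⟨0, hd⟩ := by
  set i₀ : Fin d := ⟨0, hd⟩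
  have hbox : ∀ a, a ∈ Fintype.piFinset (fun i => range (N i)) ↔ ∀ i, a i < N i := by
    simp [Fintype.mem_piFinset]
  have hP_image : P = (fun a : Fin d → ℕ => v₀ + ∑ i, (a i : ℤ) • v i) ''
      Fintype.piFinset (fun i => range (N i)) := by
    ext x
    simp [hP, eq_comm]
  have hsplit : ∀ a : Fin d → ℕ, v₀ + ∑ i, (a i : ℤ) • v i =
      (a i₀ : ℤ) • v i₀ + (v₀ + ∑ i ∈ univ.erase i₀, (a i : ℤ) • v i) := fun a => by
    rw [← add_sum_erase _ _ (mem_univ i₀)]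
    abel
  rw [hP_image]
  refine ncard_image_inter_div_ncard_image_le hp.pos i₀
    (fun a ha b hb => hproper a b ((hbox a).1 ha) ((hbox b).1 hb)) Λ ?_
  intro a ha b hb hfa hfb hagree
  have hrest : ∑ i ∈ univ.erase i₀, (a i : ℤ) • v i = ∑ i ∈ univ.erase i₀, (b i : ℤ) • v i :=
    sum_congr rfl fun i hi => by rw [hagree i (ne_of_mem_erase hi)]
  rw [SetLike.mem_coe, hsplit, hrest] at hfa
  rw [SetLike.mem_coe, hsplit] at hfb
  exact Nat.modEq_iff_dvd.2 (hdvd (b i₀) (a i₀) _ ⟨b, (hbox b).1 hb, rfl⟩ hfb hfa)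

/-- Let `P = {v₀ + a₁v₁ + ... + a_d v_d : 0 ≤ a_i < N_i}` be a proper generalized arithmetic
progression in an abelian group `Z` and `Λ ≤ Z` a subgroup. Suppose `p` is a prime such that
whenever `a₁'•v₁ + c ∈ Λ` and `a₁''•v₁ + c ∈ Λ`, with `c = v₀ + Σ_{i≥2} a_i v_i` of the
appropriate form, then `p ∣ a₁' - a₁''`. Then `|P ∩ Λ| / |P| ≤ ⌈N₁/p⌉ / N₁`. -/
theorem gap_inter_subgroup_density_le
    {Z : Type*} [AddCommGroup Z] (d : ℕ) (hd : 1 ≤ d)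
    (v₀ : Z) (v : Fin d → Z) (N : Fin d → ℕ) (hN : ∀ i, 0 < N i)
    (P : Set Z)
    (hP : P = {x : Z | ∃ a : Fin d → ℕ, (∀ i, a i < N i) ∧
      x = v₀ + ∑ i, (a i : ℤ) • v i})
    (hproper : ∀ a b : Fin d → ℕ, (∀ i, a i < N i) → (∀ i, b i < N i) →
      v₀ + ∑ i, (a i : ℤ) • v i = v₀ + ∑ i, (b i : ℤ) • v i → a = b)
    (Λ : AddSubgroup Z) (p : ℕ) (hp : p.Prime)
    (hdvd : ∀ (a₁ a₁' : ℤ) (c : Z),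
      (∃ a : Fin d → ℕ, (∀ i, a i < N i) ∧
        c = v₀ + ∑ i ∈ Finset.univ.erase (⟨0, hd⟩ : Fin d), (a i : ℤ) • v i) →
      a₁ • v ⟨0, hd⟩ + c ∈ Λ → a₁' • v ⟨0, hd⟩ + c ∈ Λ → (p : ℤ) ∣ (a₁ - a₁')) :
    ((P ∩ (Λ : Set Z)).ncard : ℚ) / P.ncard ≤ (⌈(N ⟨0, hd⟩ : ℚ) / p⌉ : ℚ) / N ⟨0, hd⟩ :=
  gap_inter_subgroup_density_le_general d hd v₀ v N P hP hproper Λ p hp hdvd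
end

section
/- Let L ⊆ Σ* be a regular language over a finite alphabet Σ. Then there exists a constant C such that for all n, the number of words in L of length at most n+1 is at most C times the number of words in L of length at most n (where we interpret the inequality as holding whenever L contains at least one word of length at most n). -/
/-!
Let `M` be a DFA with `k` states recognising `L`. Every `w ∈ L` with `|w| ≤ n + 1` is obtained
from some `v ∈ L` with `|v| ≤ n` by replacing a slice `v[i, j)` with a word `y`, where
`i, j, |y| ≤ k`: take `v = w` if `|w| ≤ n`; if `|w| = n + 1 ≥ k`, pump `w = xyz` down to `v = xz`;
and if `|w| = n + 1 < k`, replace the whole of any `v ∈ L^{≤ n}` by `w`. There are only finitely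
many such edits, so `|L^{≤ n+1}|` is at most their number times `|L^{≤ n}|`.
-/

theorem Set.ncard_le_ncard_mul_ncard_of_subset_image2 {β γ δ : Type*} {s : Set δ} {t : Set β}
    {u : Set γ} (f : β → γ → δ) (ht : t.Finite) (hu : u.Finite) (h : s ⊆ Set.image2 f t u) :
    s.ncard ≤ t.ncard * u.ncard :=
  calc s.ncard ≤ (Set.image2 f t u).ncard := Set.ncard_le_ncard h (ht.image2 f hu)
    _ ≤ (t ×ˢ u).ncard := by
      rw [← Set.image_uncurry_prod]
      exact Set.ncard_image_le (ht.prod hu)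
    _ = t.ncard * u.ncard := Set.ncard_prod

namespace List

variable {α : Type*}

def replaceSlice (v : List α) (e : ℕ × List α × ℕ) : List α :=
  v.take e.1 ++ e.2.1 ++ v.drop e.2.2

def boundedSliceEdits (α : Type*) (k : ℕ) : Set (ℕ × List α × ℕ) :=
  Set.Iic k ×ˢ {y | y.length ≤ k} ×ˢ Set.Iic k

theorem boundedSliceEdits_finite [Finite α] (k : ℕ) : (boundedSliceEdits α k).Finite :=
  (Set.finite_Iic k).prod ((List.finite_length_le α k).prod (Set.finite_Iic k))

end List

namespace DFA

variable {α σ : Type*} (M : DFA α σ)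

theorem exists_append_mem_accepts_of_card_le_length [Fintype σ] {w : List α}
    (hw : w ∈ M.accepts) (hlen : Fintype.card σ ≤ w.length) :
    ∃ x y z, w = x ++ y ++ z ∧ x.length + y.length ≤ Fintype.card σ ∧ y ≠ [] ∧
      x ++ z ∈ M.accepts := by
  obtain ⟨q, x, y, z, rfl, hxy, hy, hx, -, hz⟩ := M.evalFrom_split (s := M.start) hlen rfl
  refine ⟨x, y, z, rfl, hxy, hy, ?_⟩
  rwa [mem_accepts, eval, evalFrom_of_append, hx, hz]

theorem setOf_length_le_succ_subset_image2_replaceSlice [Fintype σ] {n : ℕ}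
    (hne : {v | v ∈ M.accepts ∧ v.length ≤ n}.Nonempty) :
    {w | w ∈ M.accepts ∧ w.length ≤ n + 1} ⊆
      Set.image2 List.replaceSlice {v | v ∈ M.accepts ∧ v.length ≤ n}
        (List.boundedSliceEdits α (Fintype.card σ)) := by
  rintro w ⟨hw, hwn⟩
  rcases Nat.lt_or_ge w.length (n + 1) with hshort | hlong
  · exact ⟨w, ⟨hw, by omega⟩, (0, [], 0), by simp [List.boundedSliceEdits],
      by simp [List.replaceSlice]⟩
  rcases Nat.lt_or_ge w.length (Fintype.card σ) with hsmall | hbig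
  · obtain ⟨v, hv, hvn⟩ := hne
    exact ⟨v, ⟨hv, hvn⟩, (0, w, v.length), by simp [List.boundedSliceEdits]; omega,
      by simp [List.replaceSlice]⟩
  · obtain ⟨x, y, z, rfl, hxy, hy, hxz⟩ := M.exists_append_mem_accepts_of_card_le_length hw hbig
    refine ⟨x ++ z, ⟨hxz, ?_⟩, (x.length, y, x.length), ?_, by simp [List.replaceSlice]⟩
    · have := List.length_pos_iff.2 hy
      simp only [List.length_append] at hwn ⊢
      omega
    · simp only [List.boundedSliceEdits, Set.mem_prod, Set.mem_Iic, Set.mem_ofPred_eq]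
      omega

end DFA

/-- **Growth of regular languages.** If `L` is a regular language over a finite alphabet, then
there is a constant `C` such that `|L^{≤ n+1}| ≤ C · |L^{≤ n}|` whenever `L^{≤ n}` is nonempty. -/
theorem regular_language_growth {α : Type} [Fintype α] (L : Language α)
    (hL : L.IsRegular) :
    ∃ C : ℕ, ∀ n : ℕ,
      {w : List α | w ∈ L ∧ w.length ≤ n}.Nonempty →
      {w : List α | w ∈ L ∧ w.length ≤ n + 1}.ncard ≤
        C * {w : List α | w ∈ L ∧ w.length ≤ n}.ncard := by
  obtain ⟨σ, _, M, rfl⟩ := hL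
  refine ⟨(List.boundedSliceEdits α (Fintype.card σ)).ncard, fun n hne => ?_⟩
  rw [Nat.mul_comm]
  exact Set.ncard_le_ncard_mul_ncard_of_subset_image2 List.replaceSlice
    ((List.finite_length_le α n).subset fun _ hv => hv.2)
    (List.boundedSliceEdits_finite _) (M.setOf_length_le_succ_subset_image2_replaceSlice hne)
end
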